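/- arXiv:2605.13072 — 2 statements merged into one kernel-verified Lean document; each statement's English description precedes it below -/
import Mathlib

section
/- Let G = (V, E) be a finite weighted graph with real symmetric edge weights w_uv, partitioned into disjoint vertex subsets V_1, …, V_k covering V, and fix local spin assignments z^{(i)} : V_i → {−1, +1}. For polarities s ∈ {−1, +1}^k, define the merged assignment z(s) by z(s)_u = s_i · z^{(i)}_u for u ∈ V_i. Then there exists a constant K (independent of s) such that for all s, Cut(z(s)) = K + (1/2) Σ_{1 ≤ i < j ≤ k} w'_{ij} (1 − s_i s_j), where w'_{ij} = Σ_{u ∈ V_i, v ∈ V_j, (u,v)∈E} w_uv z^{(i)}_u z^{(j)}_v. Consequently, maximizing Cut(z(s)) over s is exactly a MaxCut problem on a reduced graph with k nodes and edge weights w'_{ij}. -/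
/-!
Flipping a whole block leaves every product `z_u z_v` with `u, v` in the same block unchanged
(`s_i² = 1`), so only edges between two blocks `i ≠ j` feel the polarities, each one contributing
`w_uv z_u z_v (1 - s_i s_j)` on top of its share of `Cut(zloc)`. Hence `K = Cut(zloc)`, and
grouping the inter-block edges by their unordered pair of blocks produces the reduced weights.
-/

noncomputable def cutValue {V : Type*} (E : Finset (V × V)) (w : V × V → ℝ)
    (z : V → ℝ) : ℝ :=
  (1 / 2) * ∑ e ∈ E, w e * (1 - z e.1 * z e.2)

open Finset

theorem sum_Ioi_ite_eq_or_eq {ι M : Type*} [Fintype ι] [LinearOrder ι] [LocallyFiniteOrderTop ι]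
    [AddCommMonoid M] (a b : ι) (c : M) :
    ∑ i, ∑ j ∈ Ioi i, (if (a = i ∧ b = j) ∨ (a = j ∧ b = i) then c else 0) =
      if a ≠ b then c else 0 := by
  have hcond : ∀ i, ∀ j ∈ Ioi i,
      ((a = i ∧ b = j) ∨ (a = j ∧ b = i) ↔ a ≠ b ∧ i = min a b ∧ j = max a b) := by
    intro i j hij
    grind
  rw [sum_congr rfl fun i _ => sum_congr rfl fun j hj => if_congr (hcond i j hj) rfl rfl]
  by_cases hab : a = b
  · simp [hab]
  · simp [ite_and, hab, Ne.symm hab]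

theorem sum_Ioi_sum_filter_eq_or_eq {α ι M : Type*} [Fintype ι] [LinearOrder ι]
    [LocallyFiniteOrderTop ι] [AddCommMonoid M] (E : Finset α) (a b : α → ι) (f : α → M) :
    ∑ i, ∑ j ∈ Ioi i, ∑ e ∈ E with (a e = i ∧ b e = j) ∨ (a e = j ∧ b e = i), f e =
      ∑ e ∈ E with a e ≠ b e, f e := by
  simp only [sum_filter]
  rw [sum_congr rfl fun i _ => sum_comm, sum_comm]
  exact sum_congr rfl fun e _ => sum_Ioi_ite_eq_or_eq (a e) (b e) (f e)

theorem cutValue_flip_blocks {V ι : Type*} [DecidableEq ι] (E : Finset (V × V)) (w : V × V → ℝ)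
    (P : V → ι) (s : ι → ℝ) (hs : ∀ i, s i = 1 ∨ s i = -1) (z : V → ℝ) :
    cutValue E w (fun u => s (P u) * z u) =
      cutValue E w z + (1 / 2) * ∑ e ∈ E with P e.1 ≠ P e.2,
        w e * z e.1 * z e.2 * (1 - s (P e.1) * s (P e.2)) := by
  have hsplit : ∀ e : V × V, w e * (1 - s (P e.1) * z e.1 * (s (P e.2) * z e.2)) =
      w e * (1 - z e.1 * z e.2) + w e * z e.1 * z e.2 * (1 - s (P e.1) * s (P e.2)) :=
    fun e => by ring
  have hintra_vanish : ∀ e ∈ E, w e * z e.1 * z e.2 * (1 - s (P e.1) * s (P e.2)) ≠ 0 →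
      P e.1 ≠ P e.2 := by
    intro e _ he hP
    rcases hs (P e.2) with h | h <;> simp [hP, h] at he
  rw [sum_filter_of_ne hintra_vanish]
  simp only [cutValue, hsplit, sum_add_distrib]
  ring

theorem stmt_12_general {V : Type*} (E : Finset (V × V)) (w : V × V → ℝ)
    (k : ℕ) (P : V → Fin k)
    (zloc : V → ℝ) :
    ∃ K : ℝ, ∀ s : Fin k → ℝ, (∀ i, s i = 1 ∨ s i = -1) →
      cutValue E w (fun u => s (P u) * zloc u) =
        K + (1 / 2) * ∑ i : Fin k, ∑ j ∈ Finset.Ioi i,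
          (∑ e ∈ E.filter
              (fun e => (P e.1 = i ∧ P e.2 = j) ∨ (P e.1 = j ∧ P e.2 = i)),
            w e * zloc e.1 * zloc e.2) * (1 - s i * s j) := by
  refine ⟨cutValue E w zloc, fun s hs => ?_⟩
  rw [cutValue_flip_blocks E w P s hs, ← sum_Ioi_sum_filter_eq_or_eq]
  congr 2
  refine sum_congr rfl fun i _ => sum_congr rfl fun j _ => ?_
  rw [sum_mul]
  refine sum_congr rfl fun e he => ?_
  rcases (mem_filter.mp he).2 with ⟨rfl, rfl⟩ | ⟨rfl, rfl⟩ <;> ring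

/-- QAOA² merging step. Partition the vertices of a finite weighted
graph into `k` blocks via `P : V → Fin k`, and fix local spin assignments `zloc`.
For polarities `s ∈ {−1, +1}^k`, the merged assignment `z(s)_u = s_{P u} · zloc_u`
has cut value `K + (1/2) ∑_{i<j} w'_{ij} (1 − s_i s_j)` for a constant `K`
independent of `s`, where `w'_{ij} = ∑_{u ∈ V_i, v ∈ V_j, (u,v) ∈ E} w_uv zloc_u zloc_v`.
Hence merging is exactly a MaxCut problem on a reduced `k`-node graph. -/
theorem stmt_12 {V : Type*} [Fintype V] (E : Finset (V × V)) (w : V × V → ℝ)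
    (hsym : ∀ u v : V, w (u, v) = w (v, u))
    (k : ℕ) (P : V → Fin k)
    (zloc : V → ℝ) (hzloc : ∀ u, zloc u = 1 ∨ zloc u = -1) :
    ∃ K : ℝ, ∀ s : Fin k → ℝ, (∀ i, s i = 1 ∨ s i = -1) →
      cutValue E w (fun u => s (P u) * zloc u) =
        K + (1 / 2) * ∑ i : Fin k, ∑ j ∈ Finset.Ioi i,
          (∑ e ∈ E.filter
              (fun e => (P e.1 = i ∧ P e.2 = j) ∨ (P e.1 = j ∧ P e.2 = i)),
            w e * zloc e.1 * zloc e.2) * (1 - s i * s j) :=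
  stmt_12_general E w k P zloc
end

section
/- Let N ≥ 1 and m ≥ 2 be natural numbers, let a_l = ⌈N / m^l⌉, and let L be the least index with a_L ≤ m. Then the total number of QAOA subproblem calls, Σ_{l=1}^{L} a_l + 1, is at most N/(m − 1) + L + 1; in particular, since L ≤ ⌈log N / log m⌉, the total number of subproblem calls scales linearly in N. -/
lemma geo_aux (N m : ℕ) (hm : 2 ≤ m) :
    ∀ L, ∑ l ∈ Finset.Icc 1 L, (N : ℝ) / m ^ l ≤ (N : ℝ) / (m - 1) - N / ((m - 1) * m ^ L) := by
  have hm1 : (1 : ℝ) < m := by exact_mod_cast hm.trans_lt' one_lt_two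
  have hm0 : (0 : ℝ) < (m : ℝ) - 1 := by linarith
  have hmpos : (0 : ℝ) < m := by linarith
  intro L
  induction L with
  | zero => simp
  | succ L ih =>
    rw [Finset.sum_Icc_succ_top (by omega)]
    have hpL : (0 : ℝ) < (m : ℝ) ^ L := pow_pos hmpos L
    have hpL1 : (0 : ℝ) < (m : ℝ) ^ (L + 1) := pow_pos hmpos (L + 1)
    have key : (N : ℝ) / m ^ (L + 1) - N / ((m - 1) * m ^ L) ≤ - (N / ((m - 1) * m ^ (L + 1))) := by
      rw [show -((N:ℝ) / ((m - 1) * m ^ (L + 1))) = (-N) / ((m - 1) * m ^ (L + 1)) by ring,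
        div_sub_div _ _ (ne_of_gt hpL1) (by positivity),
        div_le_div_iff₀ (by positivity) (by positivity)]
      have hNn : (0 : ℝ) ≤ N := Nat.cast_nonneg N
      have hps : (m : ℝ) ^ (L + 1) = m ^ L * m := pow_succ (m:ℝ) L
      rw [hps]; ring_nf; exact le_refl _
    linarith
  
/-- QAOA² total subproblem calls. For `N ≥ 1`, `m ≥ 2`,
`a_l = ⌈N / m^l⌉`, and `L` the least index with `a_L ≤ m`, the total number of QAOA
subproblem calls `∑_{l=1}^{L} a_l + 1` is at most `N/(m − 1) + L + 1`; in particular,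
since `L ≤ ⌈log N / log m⌉`, the total number of subproblem calls scales linearly
in `N`. -/
theorem stmt_14 (N m : ℕ) (hN : 1 ≤ N) (hm : 2 ≤ m)
    (a : ℕ → ℕ) (ha : ∀ l, a l = ⌈(N : ℝ) / m ^ l⌉₊)
    (L : ℕ) (hL : a L ≤ m) (hLmin : ∀ l < L, m < a l) :
    (∑ l ∈ Finset.Icc 1 L, (a l : ℝ)) + 1 ≤ (N : ℝ) / (m - 1) + L + 1 := by
  have hm1 : (1 : ℝ) < m := by exact_mod_cast hm.trans_lt' one_lt_two
  have hmpos : (0 : ℝ) < m := by linarith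
  have h1 : ∀ l, (a l : ℝ) ≤ (N : ℝ) / m ^ l + 1 := by
    intro l
    rw [ha l]
    exact (Nat.cast_le.mpr (Nat.ceil_le_floor_add_one _)).trans (by
      push_cast
      have := Nat.floor_le (R := ℝ) (by positivity : (0:ℝ) ≤ (N : ℝ) / m ^ l)
      linarith)
  have h2 : (∑ l ∈ Finset.Icc 1 L, (a l : ℝ)) ≤
      ∑ l ∈ Finset.Icc 1 L, ((N : ℝ) / m ^ l + 1) :=
    Finset.sum_le_sum fun l _ => h1 l
  rw [Finset.sum_add_distrib, Finset.sum_const, Nat.card_Icc] at h2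
  have h3 := geo_aux N m hm L
  have h4 : (0 : ℝ) ≤ (N : ℝ) / (((m : ℝ) - 1) * m ^ L) :=
    div_nonneg (Nat.cast_nonneg N) (mul_nonneg (by linarith) (pow_pos hmpos L).le)
  simp only [nsmul_eq_mul, mul_one, Nat.add_sub_cancel] at h2
  linarith
end
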